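/- arXiv:2512.06741 — 4 statements merged into one kernel-verified Lean document; each statement's English description precedes it below -/
import Mathlib

section
/- For every real number β > 1 and every integer n ≥ 1, the number of β-admissible words of length n satisfies β^n ≤ #Σ_β^n ≤ β^{n+1}/(β−1). -/
open Filter MeasureTheory Set

noncomputable def Tb (β : ℝ) (x : ℝ) : ℝ := Int.fract (β * x)

/-- `dig β x n` is the (n+1)-st digit `ε_{n+1}(x)` of the β-expansion of `x`. -/
noncomputable def dig (β : ℝ) (x : ℝ) (n : ℕ) : ℤ := ⌊β * (Tb β)^[n] x⌋

/-- `conv β x n` is the n-th convergent `ω_n(x)` of the β-expansion of `x`. -/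
noncomputable def conv (β : ℝ) (x : ℝ) (n : ℕ) : ℝ :=
  ∑ k ∈ Finset.range n, (dig β x k : ℝ) / β ^ (k + 1)

/-- The n-th order cylinder determined by the word `w`. -/
def cyl (β : ℝ) {n : ℕ} (w : Fin n → ℤ) : Set ℝ :=
  {x ∈ Set.Ico (0:ℝ) 1 | ∀ k : Fin n, dig β x k = w k}

/-- A finite word is β-admissible if it is the beginning of the β-expansion of some x ∈ [0,1]. -/
def admissible (β : ℝ) {n : ℕ} (w : Fin n → ℤ) : Prop :=
  ∃ x ∈ Set.Icc (0:ℝ) 1, ∀ k : Fin n, dig β x k = w k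

lemma iter_succ_eq (β x : ℝ) (n : ℕ) :
    (Tb β)^[n+1] x = β * (Tb β)^[n] x - dig β x n := by
  rw [Function.iterate_succ_apply']
  show Int.fract (β * (Tb β)^[n] x) = _
  rw [Int.fract, dig]

lemma iter_mem_Ico (β x : ℝ) (n : ℕ) : (Tb β)^[n+1] x ∈ Set.Ico (0:ℝ) 1 := by
  rw [Function.iterate_succ_apply']
  exact ⟨Int.fract_nonneg _, Int.fract_lt_one _⟩

lemma iter_mem_Icc (β : ℝ) {x : ℝ} (hx : x ∈ Set.Icc (0:ℝ) 1) (n : ℕ) :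
    (Tb β)^[n] x ∈ Set.Icc (0:ℝ) 1 := by
  cases n with
  | zero => simpa using hx
  | succ m => exact Set.Ico_subset_Icc_self (iter_mem_Ico β x m)

lemma conv_eq (β : ℝ) (hβ : 1 < β) (x : ℝ) (n : ℕ) :
    conv β x n = x - (Tb β)^[n] x / β ^ n := by
  have hb : (0:ℝ) < β := lt_trans one_pos hβ
  induction n with
  | zero => simp [conv]
  | succ m ih =>
    rw [conv, Finset.sum_range_succ, ← conv, ih, iter_succ_eq]
    have h1 : β ^ m ≠ 0 := by positivity
    have h2 : β ^ (m+1) ≠ 0 := by positivity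
    field_simp
    ring

lemma dig_nonneg (β : ℝ) (hβ : 1 < β) {x : ℝ} (hx : x ∈ Set.Icc (0:ℝ) 1) (k : ℕ) :
    0 ≤ dig β x k := by
  have := (iter_mem_Icc β hx k).1
  have hb : (0:ℝ) < β := lt_trans one_pos hβ
  exact Int.floor_nonneg.2 (by positivity)

lemma dig_le_floor (β : ℝ) (hβ : 1 < β) {x : ℝ} (hx : x ∈ Set.Icc (0:ℝ) 1) (k : ℕ) :
    dig β x k ≤ ⌊β⌋ := by
  have h := iter_mem_Icc β hx k
  have hb : (0:ℝ) < β := lt_trans one_pos hβ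
  refine Int.floor_le_floor ?_
  nlinarith [h.1, h.2]

lemma mono_iter (β : ℝ) (hβ : 1 < β) {x y : ℝ} (hxy : x ≤ y) :
    ∀ k, (∀ i, i < k → dig β x i = dig β y i) → (Tb β)^[k] x ≤ (Tb β)^[k] y := by
  intro k
  induction k with
  | zero => intro _; simpa using hxy
  | succ m ih =>
    intro h
    have h1 : (Tb β)^[m] x ≤ (Tb β)^[m] y := ih (fun i hi => h i (Nat.lt_succ_of_lt hi))
    have h2 : dig β x m = dig β y m := h m (Nat.lt_succ_self m)
    rw [iter_succ_eq, iter_succ_eq, h2]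
    have hb : (0:ℝ) < β := lt_trans one_pos hβ
    nlinarith

lemma mono_dig (β : ℝ) (hβ : 1 < β) {x y : ℝ} (hxy : x ≤ y) (k : ℕ)
    (h : ∀ i, i < k → dig β x i = dig β y i) : dig β x k ≤ dig β y k := by
  have := mono_iter β hβ hxy k h
  have hb : (0:ℝ) < β := lt_trans one_pos hβ
  exact Int.floor_le_floor (by nlinarith)

lemma dig_shift (β x : ℝ) (m i : ℕ) : dig β ((Tb β)^[m] x) i = dig β x (m + i) := by
  rw [dig, dig, ← Function.iterate_add_apply, Nat.add_comm]

lemma adm_finite (β : ℝ) (hβ : 1 < β) (n : ℕ) :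
    {w : Fin n → ℤ | admissible β w}.Finite := by
  have h : {w : Fin n → ℤ | admissible β w} ⊆
      Set.pi Set.univ (fun _ : Fin n => Set.Icc (0:ℤ) ⌊β⌋) := by
    rintro w ⟨x, hx, hw⟩ k _
    exact ⟨by rw [← hw k]; exact dig_nonneg β hβ hx k,
           by rw [← hw k]; exact dig_le_floor β hβ hx k⟩
  exact (Set.Finite.pi (fun _ => Set.finite_Icc _ _)).subset h

/-- Lemma A: `∑_{j<n} η_{j+1} + β * T^n(1) ≥ β` for `n ≥ 1`. -/
lemma lemA (β : ℝ) (hβ : 1 < β) :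
    ∀ n, 1 ≤ n → β ≤ (∑ j ∈ Finset.range n, (dig β 1 j : ℝ)) + β * (Tb β)^[n] 1 := by
  have hb : (0:ℝ) < β := lt_trans one_pos hβ
  intro n
  induction n with
  | zero => omega
  | succ m ih =>
    intro _
    rw [Finset.sum_range_succ, iter_succ_eq]
    have hfl : (dig β 1 m : ℝ) ≤ β * (Tb β)^[m] 1 := Int.floor_le _
    rcases Nat.eq_zero_or_pos m with hm | hm
    · subst hm
      simp only [Finset.range_zero, Finset.sum_empty, Finset.range_one,
        Finset.sum_singleton, Function.iterate_zero, id_eq, zero_add, mul_one] at *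
      nlinarith [mul_nonneg (sub_nonneg.2 hfl) (sub_nonneg.2 hβ.le)]
    · have := ih hm
      nlinarith

/-- Tail of an admissible word is admissible. -/
lemma tail_adm (β : ℝ) {n : ℕ} {w : Fin n → ℤ} (hw : admissible β w) (k : ℕ) (hk : k < n) :
    admissible β (fun i : Fin (n - (k+1)) => w ⟨k + 1 + i, by omega⟩) := by
  obtain ⟨x, hx, hdig⟩ := hw
  refine ⟨(Tb β)^[k+1] x, Set.Ico_subset_Icc_self (iter_mem_Ico β x k), fun i => ?_⟩
  rw [dig_shift]
  exact hdig ⟨k + 1 + i, by omega⟩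

/-- The counting recursion: N n ≤ 1 + ∑ η_{k+1} * N (n-(k+1)). -/
lemma count_rec (β : ℝ) (hβ : 1 < β) (n : ℕ) :
    {w : Fin n → ℤ | admissible β w}.ncard ≤
      1 + ∑ k ∈ Finset.range n,
        (dig β 1 k).toNat * {w : Fin (n - (k+1)) → ℤ | admissible β w}.ncard := by
  classical
  have h1 : (1:ℝ) ∈ Set.Icc (0:ℝ) 1 := ⟨zero_le_one, le_refl 1⟩
  set F : ∀ m : ℕ, Finset (Fin m → ℤ) := fun m => (adm_finite β hβ m).toFinset with hF
  have hmem : ∀ m (w : Fin m → ℤ), w ∈ F m ↔ admissible β w := by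
    intro m w; simp [hF, Set.Finite.mem_toFinset]
  set ηw : Fin n → ℤ := fun i => dig β 1 i with hηw
  set Bf : ℕ → Finset (Fin n → ℤ) := fun k =>
    (F n).filter (fun w => (∀ i : Fin n, (i:ℕ) < k → w i = dig β 1 i) ∧
      ∀ h : k < n, w ⟨k, h⟩ < dig β 1 k) with hBf
  -- cover
  have hcover : F n ⊆ insert ηw ((Finset.range n).biUnion Bf) := by
    intro w hw
    by_cases hwη : w = ηw
    · rw [hwη]; exact Finset.mem_insert_self _ _
    · refine Finset.mem_insert_of_mem ?_
      have hex : ∃ k, ∃ h : k < n, w ⟨k, h⟩ ≠ dig β 1 k := by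
        by_contra hcon
        push_neg at hcon
        exact hwη (funext fun i => by simpa [hηw] using hcon i i.isLt)
      obtain ⟨hk0, hne⟩ := Nat.find_spec hex
      have hmin : ∀ i : Fin n, (i:ℕ) < Nat.find hex → w i = dig β 1 i := by
        intro i hi
        by_contra hcon
        exact Nat.find_min hex hi ⟨i.isLt, by simpa using hcon⟩
      refine Finset.mem_biUnion.2 ⟨Nat.find hex, Finset.mem_range.2 hk0, ?_⟩
      rw [hBf, Finset.mem_filter]
      refine ⟨hw, hmin, fun h => ?_⟩
      obtain ⟨x, hx, hdig⟩ := (hmem n w).1 hw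
      have hle : dig β x (Nat.find hex) ≤ dig β 1 (Nat.find hex) := by
        refine mono_dig β hβ hx.2 _ (fun i hi => ?_)
        rw [hdig ⟨i, lt_trans hi h⟩]
        exact hmin ⟨i, lt_trans hi h⟩ hi
      rw [← hdig ⟨Nat.find hex, h⟩] at hne ⊢
      exact lt_of_le_of_ne hle hne
  -- card of each Bf k
  have hBcard : ∀ k, k < n → (Bf k).card ≤ (dig β 1 k).toNat * (F (n - (k+1))).card := by
    intro k hk
    have := Finset.card_le_card_of_injOn
      (f := fun w : Fin n → ℤ => ((w ⟨k, hk⟩, fun i : Fin (n-(k+1)) => w ⟨k+1+i, by omega⟩) :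
          ℤ × (Fin (n-(k+1)) → ℤ)))
      (s := Bf k) (t := Finset.Ico (0:ℤ) (dig β 1 k) ×ˢ F (n-(k+1))) ?_ ?_
    · calc (Bf k).card ≤ _ := this
        _ = (dig β 1 k).toNat * (F (n - (k+1))).card := by
            rw [Finset.card_product, Int.card_Ico]; ring_nf
    · intro w hw
      simp only [hBf, Finset.mem_coe, Finset.mem_filter] at hw
      obtain ⟨hwF, hlt, hltk⟩ := hw
      obtain ⟨x, hx, hdig⟩ := (hmem n w).1 hwF
      dsimp only
      refine Finset.mem_product.2 ⟨Finset.mem_Ico.2 ⟨?_, hltk hk⟩, ?_⟩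
      · rw [← hdig ⟨k, hk⟩]; exact dig_nonneg β hβ hx k
      · exact (hmem _ _).2 (tail_adm β ((hmem n w).1 hwF) k hk)
    · intro w hw w' hw' heq
      simp only [Prod.mk.injEq] at heq
      rw [Finset.mem_coe, hBf, Finset.mem_filter] at hw hw'
      funext i
      rcases lt_trichotomy (i:ℕ) k with hik | hik | hik
      · rw [hw.2.1 i hik, hw'.2.1 i hik]
      · have : i = ⟨k, hk⟩ := Fin.ext hik
        rw [this]; exact heq.1
      · have h2 := congrFun heq.2 ⟨(i:ℕ) - (k+1), by omega⟩
        simp only at h2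
        have hi : (⟨k+1+((i:ℕ)-(k+1)), by omega⟩ : Fin n) = i := by
          apply Fin.ext; simp only [Fin.val_mk]; omega
        rwa [hi] at h2
  -- assemble
  have hcard : (F n).card ≤ 1 + ∑ k ∈ Finset.range n, (Bf k).card := by
    calc (F n).card ≤ (insert ηw ((Finset.range n).biUnion Bf)).card :=
            Finset.card_le_card hcover
      _ ≤ ((Finset.range n).biUnion Bf).card + 1 := Finset.card_insert_le _ _
      _ ≤ (∑ k ∈ Finset.range n, (Bf k).card) + 1 :=
            Nat.add_le_add_right (Finset.card_biUnion_le) 1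
      _ = _ := Nat.add_comm _ 1
  have hncard : ∀ m, {w : Fin m → ℤ | admissible β w}.ncard = (F m).card := by
    intro m; exact Set.ncard_eq_toFinset_card _ (adm_finite β hβ m)
  rw [hncard]
  refine le_trans hcard ?_
  refine Nat.add_le_add_left (Finset.sum_le_sum fun k hk => ?_) 1
  rw [hncard]
  exact hBcard k (Finset.mem_range.mp hk)

lemma upper_bound (β : ℝ) (hβ : 1 < β) :
    ∀ n : ℕ, ({w : Fin n → ℤ | admissible β w}.ncard : ℝ) ≤ (β ^ (n+1) - 1) / (β - 1) := by
  have hβ0 : (0:ℝ) < β := lt_trans one_pos hβ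
  have hc : (0:ℝ) < β - 1 := by linarith
  have h1 : (1:ℝ) ∈ Set.Icc (0:ℝ) 1 := ⟨zero_le_one, le_refl 1⟩
  intro n
  induction n using Nat.strong_induction_on with
  | _ n ih =>
    rcases Nat.eq_zero_or_pos n with hn | hn
    · subst hn
      have huniv : {w : Fin 0 → ℤ | admissible β w} = Set.univ :=
        Set.eq_univ_of_forall fun w => ⟨0, ⟨le_refl 0, zero_le_one⟩, fun k => k.elim0⟩
      rw [huniv, Set.ncard_univ]
      have : Nat.card (Fin 0 → ℤ) = 1 := Nat.card_unique
      rw [this]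
      rw [pow_one]
      rw [div_self (ne_of_gt hc)]
      norm_num
    -- main case
    set t : ℝ := (Tb β)^[n] 1 with ht
    set E : ℝ := ∑ k ∈ Finset.range n, (dig β 1 k : ℝ) with hE
    have hdig_nn : ∀ k, (0:ℤ) ≤ dig β 1 k := fun k => dig_nonneg β hβ h1 k
    -- cast count_rec to ℝ
    have hrec := count_rec β hβ n
    have hrecR : ({w : Fin n → ℤ | admissible β w}.ncard : ℝ) ≤
        1 + ∑ k ∈ Finset.range n,
          (dig β 1 k : ℝ) * ({w : Fin (n - (k+1)) → ℤ | admissible β w}.ncard : ℝ) := by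
      calc ({w : Fin n → ℤ | admissible β w}.ncard : ℝ)
          ≤ ((1 + ∑ k ∈ Finset.range n,
              (dig β 1 k).toNat * {w : Fin (n - (k+1)) → ℤ | admissible β w}.ncard : ℕ) : ℝ) := by
            exact_mod_cast hrec
        _ = 1 + ∑ k ∈ Finset.range n,
              ((dig β 1 k).toNat : ℝ) * ({w : Fin (n - (k+1)) → ℤ | admissible β w}.ncard : ℝ) := by
            push_cast; ring
        _ = _ := by
            congr 1
            refine Finset.sum_congr rfl fun k _ => ?_
            have : (((dig β 1 k).toNat : ℕ) : ℝ) = ((dig β 1 k : ℤ) : ℝ) := by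
              exact_mod_cast Int.toNat_of_nonneg (hdig_nn k)
            rw [this]
    -- term-wise bound using ih
    have hterm : ∀ k ∈ Finset.range n,
        (dig β 1 k : ℝ) * ({w : Fin (n - (k+1)) → ℤ | admissible β w}.ncard : ℝ) ≤
          (dig β 1 k : ℝ) * ((β ^ (n-k) - 1) / (β - 1)) := by
      intro k hk
      have hkn := Finset.mem_range.mp hk
      have := ih (n - (k+1)) (by omega)
      have hexp : n - (k+1) + 1 = n - k := by omega
      rw [hexp] at this
      exact mul_le_mul_of_nonneg_left this (by exact_mod_cast hdig_nn k)
    -- the sum identity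
    have hsum : ∑ k ∈ Finset.range n, (dig β 1 k : ℝ) * β ^ (n-k) = β ^ (n+1) - β * t := by
      have hconv := conv_eq β hβ 1 n
      have h2 : ∑ k ∈ Finset.range n, (dig β 1 k : ℝ) * β ^ (n-k)
          = β ^ (n+1) * conv β 1 n := by
        rw [conv, Finset.mul_sum]
        refine Finset.sum_congr rfl fun k hk => ?_
        have hkn := Finset.mem_range.mp hk
        have : β ^ (n+1) = β ^ (n-k) * β ^ (k+1) := by
          rw [← pow_add]; congr 1; omega
        rw [this]
        field_simp
      rw [h2, hconv]
      have hβn : β ^ n ≠ 0 := by positivity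
      field_simp
      ring
    -- assemble
    have hEt := lemA β hβ n hn
    calc ({w : Fin n → ℤ | admissible β w}.ncard : ℝ)
        ≤ 1 + ∑ k ∈ Finset.range n,
            (dig β 1 k : ℝ) * ((β ^ (n-k) - 1) / (β - 1)) :=
          le_trans hrecR (by have := Finset.sum_le_sum hterm; linarith)
      _ = 1 + ((β ^ (n+1) - β * t) - E) / (β - 1) := by
          rw [hE, ← hsum, ← Finset.sum_sub_distrib, Finset.sum_div]
          congr 1
          refine Finset.sum_congr rfl fun k _ => ?_
          field_simp
      _ = ((β - 1) + ((β ^ (n+1) - β * t) - E)) / (β - 1) := by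
          field_simp
      _ ≤ (β ^ (n+1) - 1) / (β - 1) := by
          rw [← ht, ← hE] at hEt
          exact (div_le_div_iff_of_pos_right hc).mpr (by linarith)

lemma lower_bound (β : ℝ) (hβ : 1 < β) (n : ℕ) :
    β ^ n ≤ ({w : Fin n → ℤ | admissible β w}.ncard : ℝ) := by
  classical
  have hβ0 : (0:ℝ) < β := lt_trans one_pos hβ
  have hpow : (0:ℝ) < β ^ n := by positivity
  set S := {w : Fin n → ℤ | admissible β w} with hS
  have hfin := adm_finite β hβ n
  set F : Finset (Fin n → ℤ) := hfin.toFinset with hF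
  set c : (Fin n → ℤ) → ℝ := fun w => ∑ k : Fin n, (w k : ℝ) / β ^ ((k:ℕ) + 1) with hc
  -- cover of [0,1)
  have hcover : Set.Ico (0:ℝ) 1 ⊆ ⋃ w ∈ F, Set.Icc (c w) (c w + (β ^ n)⁻¹) := by
    intro x hx
    set w : Fin n → ℤ := fun k => dig β x k with hw
    have hadm : admissible β w := ⟨x, Set.Ico_subset_Icc_self hx, fun k => rfl⟩
    have hwF : w ∈ F := hfin.mem_toFinset.2 hadm
    have hcw : c w = conv β x n := by
      rw [hc, conv, ← Fin.sum_univ_eq_sum_range (fun k => (dig β x k : ℝ) / β ^ (k+1)) n]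
    have hid := conv_eq β hβ x n
    have hT := iter_mem_Icc β (Set.Ico_subset_Icc_self hx) n
    refine Set.mem_biUnion hwF ?_
    constructor
    · rw [hcw, hid]
      have : 0 ≤ (Tb β)^[n] x / β ^ n := div_nonneg hT.1 hpow.le
      linarith
    · rw [hcw, hid]
      have : (Tb β)^[n] x / β ^ n ≤ (β ^ n)⁻¹ := by
        rw [div_le_iff₀ hpow, inv_mul_cancel₀ (ne_of_gt hpow) ]
        exact hT.2
      linarith
  -- measure estimate
  have hvol : (1:ENNReal) ≤ (F.card : ENNReal) * ENNReal.ofReal ((β ^ n)⁻¹) := by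
    have h1 : (1:ENNReal) = volume (Set.Ico (0:ℝ) 1) := by
      rw [Real.volume_Ico]; norm_num
    rw [h1]
    calc volume (Set.Ico (0:ℝ) 1)
        ≤ volume (⋃ w ∈ F, Set.Icc (c w) (c w + (β ^ n)⁻¹)) := measure_mono hcover
      _ ≤ ∑ w ∈ F, volume (Set.Icc (c w) (c w + (β ^ n)⁻¹)) := measure_biUnion_finset_le F _
      _ = ∑ w ∈ F, ENNReal.ofReal ((β ^ n)⁻¹) := by
          refine Finset.sum_congr rfl fun w _ => ?_
          rw [Real.volume_Icc]
          congr 1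
          ring
      _ = (F.card : ENNReal) * ENNReal.ofReal ((β ^ n)⁻¹) := by
          rw [Finset.sum_const, nsmul_eq_mul]
  -- convert to ℝ
  have hNcard : S.ncard = F.card := Set.ncard_eq_toFinset_card _ hfin
  have hreal : (1:ℝ) ≤ (F.card : ℝ) * (β ^ n)⁻¹ := by
    have h2 : (F.card : ENNReal) * ENNReal.ofReal ((β ^ n)⁻¹)
        = ENNReal.ofReal ((F.card : ℝ) * (β ^ n)⁻¹) := by
      rw [ENNReal.ofReal_mul (by positivity), ENNReal.ofReal_natCast]
    rw [h2] at hvol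
    have := (ENNReal.one_le_ofReal).mp hvol
    exact this
  rw [hNcard]
  calc β ^ n = β ^ n * 1 := by ring
    _ ≤ β ^ n * ((F.card : ℝ) * (β ^ n)⁻¹) := by
        exact mul_le_mul_of_nonneg_left hreal hpow.le
    _ = (F.card : ℝ) := by field_simp


/-- Rényi's bounds on the number of β-admissible words of length n. -/
theorem stmt0 (β : ℝ) (hβ : 1 < β) (n : ℕ) (hn : 1 ≤ n) :
    β ^ n ≤ ({w : Fin n → ℤ | admissible β w}.ncard : ℝ) ∧
      ({w : Fin n → ℤ | admissible β w}.ncard : ℝ) ≤ β ^ (n + 1) / (β - 1) := by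
  refine ⟨lower_bound β hβ n, le_trans (upper_bound β hβ n) ?_⟩
  have hc : (0:ℝ) < β - 1 := by linarith
  exact (div_le_div_iff_of_pos_right hc).mpr (by linarith)
end

section
/- For every β > 1 and n ≥ 1, among any n+1 consecutive cylinders of order n (ordered as subintervals of [0,1)), at least one is a full cylinder. -/
open Filter MeasureTheory Set

section Aux

variable {β : ℝ}

lemma Tb_mem (β x : ℝ) : Tb β x ∈ Set.Ico (0:ℝ) 1 :=
  ⟨Int.fract_nonneg _, Int.fract_lt_one _⟩

lemma iter_mem {x : ℝ} (hx : x ∈ Set.Ico (0:ℝ) 1) (k : ℕ) :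
    (Tb β)^[k] x ∈ Set.Ico (0:ℝ) 1 := by
  cases k with
  | zero => exact hx
  | succ k => rw [Function.iterate_succ_apply']; exact Tb_mem _ _

noncomputable def pc (β : ℝ) (W : ℕ → ℤ) (k : ℕ) : ℝ :=
  ∑ j ∈ Finset.range k, (W j : ℝ) / β ^ (j + 1)

lemma pc_succ (W : ℕ → ℤ) (k : ℕ) :
    pc β W (k + 1) = pc β W k + (W k : ℝ) / β ^ (k + 1) := Finset.sum_range_succ _ _

lemma pc_nonneg (hβ : 0 < β) {W : ℕ → ℤ} (hW : ∀ j, 0 ≤ W j) (k : ℕ) :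
    0 ≤ pc β W k := by
  apply Finset.sum_nonneg
  intro j _
  exact div_nonneg (by exact_mod_cast hW j) (by positivity)

lemma pc_mono (hβ : 0 < β) {W : ℕ → ℤ} (hW : ∀ j, 0 ≤ W j) {a b : ℕ} (h : a ≤ b) :
    pc β W a ≤ pc β W b := by
  apply Finset.sum_le_sum_of_subset_of_nonneg (Finset.range_subset_range.mpr h)
  intro j _ _
  exact div_nonneg (by exact_mod_cast hW j) (by positivity)

lemma dig_bounds {x : ℝ} {k : ℕ} {m : ℤ} (h : dig β x k = m) :
    (m : ℝ) ≤ β * (Tb β)^[k] x ∧ β * (Tb β)^[k] x < (m : ℝ) + 1 := by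
  rw [dig, Int.floor_eq_iff] at h
  exact ⟨h.1, by exact_mod_cast h.2⟩

lemma iter_eq (hβ : 1 < β) {x : ℝ} (W : ℕ → ℤ) :
    ∀ k, (∀ j, j < k → dig β x j = W j) → (Tb β)^[k] x = β ^ k * (x - pc β W k) := by
  intro k
  induction k with
  | zero => intro _; simp [pc]
  | succ k ih =>
    intro h
    have hprev := ih (fun j hj => h j (Nat.lt_succ_of_lt hj))
    have hd := h k (Nat.lt_succ_self k)
    rw [dig] at hd
    have hA : (β : ℝ) ^ (k + 1) ≠ 0 := by positivity
    rw [Function.iterate_succ_apply', Tb, ← Int.self_sub_floor, hprev, ← hprev, hd, hprev, pc_succ]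
    field_simp
    ring
end Aux

section Aux2

variable {β : ℝ}

lemma cyl_bounds (hβ : 1 < β) {n : ℕ} {w : Fin n → ℤ} {W : ℕ → ℤ}
    (hW : ∀ k : Fin n, W k = w k) {x : ℝ} (hx : x ∈ cyl β w) :
    pc β W n ≤ x ∧ x < 1 ∧ ∀ k, k < n → x < pc β W (k + 1) + (β ^ (k + 1))⁻¹ := by
  have hβ0 : (0:ℝ) < β := lt_trans one_pos hβ
  obtain ⟨hx01, hxd⟩ := hx
  have hdW : ∀ j, j < n → dig β x j = W j := by
    intro j hj
    rw [show W j = W ((⟨j, hj⟩ : Fin n) : ℕ) from rfl, hW ⟨j, hj⟩]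
    exact hxd ⟨j, hj⟩
  refine ⟨?_, hx01.2, ?_⟩
  · have h0 := (iter_mem (β := β) hx01 n).1
    rw [iter_eq hβ W n hdW] at h0
    nlinarith [pow_pos hβ0 n]
  · intro k hk
    have hub := (dig_bounds (hdW k hk)).2
    rw [iter_eq hβ W k (fun j hj => hdW j (lt_trans hj hk))] at hub
    have hA : (0:ℝ) < β ^ (k + 1) := pow_pos hβ0 (k + 1)
    have hAeq : β * β ^ k = β ^ (k + 1) := by ring
    rw [pc_succ]
    rw [← mul_assoc, hAeq] at hub
    have h2 : β ^ (k + 1) * ((W k : ℝ) / β ^ (k + 1)) = (W k : ℝ) :=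
      mul_div_cancel₀ _ (ne_of_gt hA)
    have h3 : β ^ (k + 1) * (β ^ (k + 1))⁻¹ = 1 := mul_inv_cancel₀ (ne_of_gt hA)
    nlinarith [hub]
end Aux2

section Aux3

variable {β : ℝ}

lemma mem_cyl_of (hβ : 1 < β) {n : ℕ} {w : Fin n → ℤ} {W : ℕ → ℤ}
    (hW : ∀ k : Fin n, W k = w k) (hW0 : ∀ j, 0 ≤ W j) {x : ℝ}
    (h1 : pc β W n ≤ x) (h2 : x < 1)
    (h3 : ∀ k, k < n → x < pc β W (k + 1) + (β ^ (k + 1))⁻¹) :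
    x ∈ cyl β w := by
  have hβ0 : (0:ℝ) < β := lt_trans one_pos hβ
  have key : ∀ k, k ≤ n → ∀ j, j < k → dig β x j = W j := by
    intro k
    induction k with
    | zero => intro _ j hj; omega
    | succ k ih =>
      intro hk j hj
      rcases Nat.lt_succ_iff_lt_or_eq.mp hj with hcase | hcase
      · exact ih (by omega) j hcase
      · subst hcase
        have hT := iter_eq hβ W j (fun m hm => ih (by omega) m hm)
        have hA : (0:ℝ) < β ^ (j + 1) := pow_pos hβ0 (j + 1)
        have hAeq : β * β ^ j = β ^ (j + 1) := by ring
        have hmono : pc β W (j + 1) ≤ pc β W n := pc_mono hβ0 hW0 (by omega)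
        have hdiv : β ^ (j + 1) * ((W j : ℝ) / β ^ (j + 1)) = (W j : ℝ) :=
          mul_div_cancel₀ _ (ne_of_gt hA)
        have hinv : β ^ (j + 1) * (β ^ (j + 1))⁻¹ = 1 := mul_inv_cancel₀ (ne_of_gt hA)
        have hup := h3 j (by omega)
        rw [pc_succ] at hup hmono
        rw [dig, hT, Int.floor_eq_iff]
        constructor
        · push_cast
          rw [← mul_assoc, hAeq]
          nlinarith
        · push_cast
          rw [← mul_assoc, hAeq]
          nlinarith
  refine ⟨⟨le_trans (pc_nonneg hβ0 hW0 n) h1, h2⟩, ?_⟩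
  intro k
  rw [key n le_rfl k k.isLt]
  exact hW k

lemma endpoint_digits (hβ : 1 < β) {W : ℕ → ℤ} (hW0 : ∀ j, 0 ≤ W j) {k : ℕ} {y : ℝ}
    (hy : y = pc β W (k + 1) + (β ^ (k + 1))⁻¹)
    (hmin : ∀ j, j < k → y < pc β W (j + 1) + (β ^ (j + 1))⁻¹) :
    (∀ j, j < k → dig β y j = W j) ∧ dig β y k = W k + 1 ∧ ∀ j, k < j → dig β y j = 0 := by
  have hβ0 : (0:ℝ) < β := lt_trans one_pos hβ
  have hdigs : ∀ m, m ≤ k → ∀ j, j < m → dig β y j = W j := by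
    intro m
    induction m with
    | zero => intro _ j hj; omega
    | succ m ih =>
      intro hm j hj
      rcases Nat.lt_succ_iff_lt_or_eq.mp hj with hcase | hcase
      · exact ih (by omega) j hcase
      · subst hcase
        have hT := iter_eq hβ W j (fun i hi => ih (by omega) i hi)
        have hA : (0:ℝ) < β ^ (j + 1) := pow_pos hβ0 (j + 1)
        have hAeq : β * β ^ j = β ^ (j + 1) := by ring
        have hmono : pc β W (j + 1) ≤ pc β W (k + 1) := pc_mono hβ0 hW0 (by omega)
        have hinvpos : (0:ℝ) < (β ^ (k + 1))⁻¹ := by positivity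
        have hdiv : β ^ (j + 1) * ((W j : ℝ) / β ^ (j + 1)) = (W j : ℝ) :=
          mul_div_cancel₀ _ (ne_of_gt hA)
        have hinv : β ^ (j + 1) * (β ^ (j + 1))⁻¹ = 1 := mul_inv_cancel₀ (ne_of_gt hA)
        have hup := hmin j (by omega)
        rw [pc_succ] at hup hmono
        rw [dig, hT, Int.floor_eq_iff]
        constructor
        · push_cast
          rw [← mul_assoc, hAeq]
          nlinarith
        · push_cast
          rw [← mul_assoc, hAeq]
          nlinarith
  have hTk := iter_eq hβ W k (fun i hi => hdigs k le_rfl i hi)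
  have hA : (0:ℝ) < β ^ (k + 1) := pow_pos hβ0 (k + 1)
  have hval : β * (Tb β)^[k] y = ((W k + 1 : ℤ) : ℝ) := by
    rw [hTk, ← mul_assoc, show β * β ^ k = β ^ (k + 1) from by ring, hy, pc_succ]
    push_cast
    field_simp
    ring
  have hdk : dig β y k = W k + 1 := by
    rw [dig, hval, Int.floor_intCast]
  have hTk1 : (Tb β)^[k + 1] y = 0 := by
    rw [Function.iterate_succ_apply', Tb, hval, Int.fract_intCast]
  have hTzero : ∀ j, k + 1 ≤ j → (Tb β)^[j] y = 0 := by
    intro j hj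
    obtain ⟨d, rfl⟩ := Nat.exists_eq_add_of_le hj
    rw [Nat.add_comm, Function.iterate_add_apply, hTk1]
    exact Function.iterate_fixed (by simp [Tb, Int.fract_zero]) d
  refine ⟨fun j hj => hdigs k le_rfl j hj, hdk, fun j hj => ?_⟩
  rw [dig, hTzero j (by omega)]
  simp

end Aux3

/-- among any n+1 consecutive cylinders of order n, at least one is full. -/
theorem stmt4 (β : ℝ) (hβ : 1 < β) (n : ℕ) (hn : 1 ≤ n)
    (f : Fin (n + 1) → Fin n → ℤ) (hadm : ∀ i, (cyl β (f i)).Nonempty)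
    (hcons : ∀ i : Fin n, sSup (cyl β (f i.castSucc)) = sInf (cyl β (f i.succ))) :
    ∃ i, volume (cyl β (f i)) = ENNReal.ofReal ((β ^ n)⁻¹) := by
  classical
  by_contra hcon
  push_neg at hcon
  have hβ0 : (0:ℝ) < β := lt_trans one_pos hβ
  have hrne : (Finset.range n).Nonempty := Finset.nonempty_range_iff.mpr (by omega)
  set W : ℕ → ℕ → ℤ := fun m j =>
    if h : m < n + 1 ∧ j < n then f ⟨m, h.1⟩ ⟨j, h.2⟩ else 0 with hWdef
  have hWf : ∀ (i : Fin (n + 1)) (k : Fin n), W i k = f i k := by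
    intro i k
    simp only [hWdef]
    rw [dif_pos ⟨i.isLt, k.isLt⟩]
  have hW0 : ∀ m j, 0 ≤ W m j := by
    intro m j
    by_cases h : m < n + 1 ∧ j < n
    · obtain ⟨x, hx⟩ := hadm ⟨m, h.1⟩
      have hd := hx.2 ⟨j, h.2⟩
      simp only [hWdef]
      rw [dif_pos h, ← hd]
      exact Int.floor_nonneg.mpr (mul_nonneg hβ0.le (iter_mem (β := β) hx.1 j).1)
    · simp only [hWdef]
      rw [dif_neg h]
  set c : ℕ → ℝ := fun m => pc β (W m) n with hcdef
  set M : ℕ → ℝ := fun m =>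
    min 1 ((Finset.range n).inf' hrne fun k => pc β (W m) (k + 1) + (β ^ (k + 1))⁻¹) with hMdef
  have hcyl : ∀ i : Fin (n + 1), cyl β (f i) = Set.Ico (c i) (M i) := by
    intro i
    ext x
    constructor
    · intro hx
      obtain ⟨h1, h2, h3⟩ := cyl_bounds hβ (hWf i) hx
      refine ⟨h1, lt_min h2 ?_⟩
      exact (Finset.lt_inf'_iff hrne).mpr fun k hk => h3 k (Finset.mem_range.mp hk)
    · rintro ⟨h1, h2⟩
      rw [lt_min_iff] at h2
      exact mem_cyl_of hβ (hWf i) (hW0 i) h1 h2.1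
        (fun k hk => (Finset.lt_inf'_iff hrne).mp h2.2 k (Finset.mem_range.mpr hk))
  have hlt : ∀ i : Fin (n + 1), c i < M i := by
    intro i
    obtain ⟨x, hx⟩ := hadm i
    rw [hcyl i] at hx
    exact lt_of_le_of_lt hx.1 hx.2
  have hM1 : ∀ m, M m ≤ 1 := fun m => min_le_left _ _
  have hMc : ∀ m, M m ≤ c m + (β ^ n)⁻¹ := by
    intro m
    have hnm : n - 1 ∈ Finset.range n := Finset.mem_range.mpr (by omega)
    have h := (min_le_right (1:ℝ) _).trans
      (Finset.inf'_le (fun k => pc β (W m) (k + 1) + (β ^ (k + 1))⁻¹) hnm)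
    rwa [show n - 1 + 1 = n from by omega] at h
  have hfull : ∀ i : Fin (n + 1), M i < c i + (β ^ n)⁻¹ := by
    intro i
    rcases lt_or_eq_of_le (hMc i) with h | h
    · exact h
    · exfalso
      apply hcon i
      rw [hcyl i, Real.volume_Ico, h]
      congr 1
      ring
  have hCsup : ∀ m, m < n → M m = c (m + 1) := by
    intro m hm
    have h := hcons ⟨m, hm⟩
    rw [hcyl ((⟨m, hm⟩ : Fin n).castSucc), hcyl ((⟨m, hm⟩ : Fin n).succ),
        csSup_Ico (hlt _), csInf_Ico (hlt _)] at h
    simpa using h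
  have hbind : ∀ m : ℕ, ∃ k : ℕ, ∀ _ : m < n, k + 1 < n ∧
      M m = pc β (W m) (k + 1) + (β ^ (k + 1))⁻¹ ∧
      ∀ j, j < k → M m < pc β (W m) (j + 1) + (β ^ (j + 1))⁻¹ := by
    intro m
    by_cases hm : m < n
    swap
    · exact ⟨0, fun h => absurd h hm⟩
    have hMlt1 : M m < 1 := by
      have h1 := hCsup m hm
      have h2 : c (m + 1) < M (m + 1) := hlt ⟨m + 1, by omega⟩
      have h3 := hM1 (m + 1)
      linarith
    have hXlt : ((Finset.range n).inf' hrne fun k =>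
        pc β (W m) (k + 1) + (β ^ (k + 1))⁻¹) < 1 := by
      by_contra hX
      push_neg at hX
      have hMm : M m = 1 := min_eq_left hX
      linarith
    obtain ⟨k0, hk0mem, hk0⟩ := Finset.exists_mem_eq_inf' hrne
      (fun k => pc β (W m) (k + 1) + (β ^ (k + 1))⁻¹)
    have hMeq : M m = pc β (W m) (k0 + 1) + (β ^ (k0 + 1))⁻¹ := by
      have h : M m = (Finset.range n).inf' hrne
          (fun k => pc β (W m) (k + 1) + (β ^ (k + 1))⁻¹) := min_eq_right hXlt.le
      rw [h, hk0]
    have hPex : ∃ k, k < n ∧ M m = pc β (W m) (k + 1) + (β ^ (k + 1))⁻¹ :=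
      ⟨k0, Finset.mem_range.mp hk0mem, hMeq⟩
    have hspec := Nat.find_spec hPex
    refine ⟨Nat.find hPex, fun _ => ⟨?_, hspec.2, ?_⟩⟩
    · rcases Nat.lt_or_ge (Nat.find hPex + 1) n with h | h
      · exact h
      · exfalso
        have hkn : Nat.find hPex + 1 = n := by
          have := hspec.1
          omega
        have heq := hspec.2
        rw [hkn] at heq
        have hf : M m < c m + (β ^ n)⁻¹ := hfull ⟨m, by omega⟩
        have hcm : c m = pc β (W m) n := rfl
        linarith
    · intro j hj
      have hnP := Nat.find_min hPex hj
      push_neg at hnP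
      have hjn : j < n := by
        have := hspec.1
        omega
      have hle : M m ≤ pc β (W m) (j + 1) + (β ^ (j + 1))⁻¹ :=
        (min_le_right (1:ℝ) _).trans (Finset.inf'_le _ (Finset.mem_range.mpr hjn))
      exact lt_of_le_of_ne hle (hnP hjn)
  choose K hK using hbind
  have hdesc : ∀ m, m + 1 < n → K (m + 1) < K m := by
    intro m hm
    obtain ⟨hk1, hk2, hk3⟩ := hK m (by omega)
    obtain ⟨hk1', hk2', hk3'⟩ := hK (m + 1) hm
    set k := K m with hkdef
    set y := M m with hydef
    have hyc : y = c (m + 1) := hCsup m (by omega)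
    have hymem : y ∈ cyl β (f ⟨m + 1, by omega⟩) := by
      rw [hcyl ⟨m + 1, by omega⟩]
      refine ⟨hyc.ge, ?_⟩
      rw [hyc]
      exact hlt ⟨m + 1, by omega⟩
    have hEnd := endpoint_digits hβ (hW0 m) hk2 hk3
    obtain ⟨hE1, hE2, hE3⟩ := hEnd
    have hWnext : ∀ j, j < n → W (m + 1) j = dig β y j := by
      intro j hj
      have h2 := (hymem.2 ⟨j, hj⟩).symm
      have hW' : W (m + 1) j = f ⟨m + 1, by omega⟩ ⟨j, hj⟩ := by
        simp only [hWdef]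
        rw [dif_pos (⟨by omega, hj⟩ : m + 1 < n + 1 ∧ j < n)]
      rw [hW']
      exact h2
    have hWlt : ∀ j, j < k → W (m + 1) j = W m j := fun j hj => by
      rw [hWnext j (by omega), hE1 j hj]
    have hWk : W (m + 1) k = W m k + 1 := by
      rw [hWnext k (by omega), hE2]
    have hWgt : ∀ j, k < j → j < n → W (m + 1) j = 0 := fun j hj hjn => by
      rw [hWnext j hjn, hE3 j hj]
    have hA : (0:ℝ) < β ^ (k + 1) := pow_pos hβ0 (k + 1)
    have hA' : (β : ℝ) ^ (k + 1) ≠ 0 := ne_of_gt hA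
    have hpck1 : pc β (W (m + 1)) (k + 1) = y := by
      rw [pc_succ, hWk]
      have hsame : pc β (W (m + 1)) k = pc β (W m) k :=
        Finset.sum_congr rfl fun j hj => by rw [hWlt j (Finset.mem_range.mp hj)]
      rw [hsame, hk2, pc_succ]
      push_cast
      field_simp
      ring
    have hpcs : ∀ d, k + 1 + d ≤ n → pc β (W (m + 1)) (k + 1 + d) = y := by
      intro d
      induction d with
      | zero => intro _; simpa using hpck1
      | succ d ih =>
        intro hd
        rw [show k + 1 + (d + 1) = (k + 1 + d) + 1 from by omega, pc_succ,
            ih (by omega), hWgt (k + 1 + d) (by omega) (by omega)]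
        simp
    by_contra hcontra
    push_neg at hcontra
    have hk'n : K (m + 1) + 1 ≤ n := by omega
    have hpc' : pc β (W (m + 1)) (K (m + 1) + 1) = y := by
      have h := hpcs (K (m + 1) - k) (by omega)
      rwa [show k + 1 + (K (m + 1) - k) = K (m + 1) + 1 from by omega] at h
    have hM' : M (m + 1) = y + (β ^ (K (m + 1) + 1))⁻¹ := by
      rw [hk2', hpc']
    have hfull' : M (m + 1) < c (m + 1) + (β ^ n)⁻¹ := hfull ⟨m + 1, by omega⟩
    have hpow : (β ^ n)⁻¹ ≤ (β ^ (K (m + 1) + 1))⁻¹ :=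
      inv_anti₀ (pow_pos hβ0 _) (pow_le_pow_right₀ hβ.le hk'n)
    linarith
  have hKbound : ∀ m, m < n → K m + m + 1 < n := by
    intro m
    induction m with
    | zero =>
      intro hm
      have := (hK 0 hm).1
      omega
    | succ m ih =>
      intro hm
      have h1 := hdesc m hm
      have h2 := ih (by omega)
      omega
  have hfin := hKbound (n - 1) (by omega)
  omega
end

section
/- Let β > 1 and let J ⊂ [0,1] be an interval. For any integer n with (n+1)β^{−n} < |J|, there exists a full cylinder of order n contained in J. -/
open Filter MeasureTheory Set

namespace BetaAux

variable {β x y : ℝ}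

noncomputable def tf (β x : ℝ) : ℕ → ℝ
  | 0 => 1
  | n+1 => min 1 (β * tf β x n - dig β x n)

noncomputable def ee (β x : ℝ) (n : ℕ) : ℝ := conv β x n + (β ^ n)⁻¹ * tf β x n

lemma tf_zero : tf β x 0 = 1 := rfl

lemma tf_succ (n : ℕ) : tf β x (n+1) = min 1 (β * tf β x n - (dig β x n : ℝ)) := rfl

lemma Tb_mem (y : ℝ) : Tb β y ∈ Ico (0:ℝ) 1 := ⟨Int.fract_nonneg _, Int.fract_lt_one _⟩

lemma iter_mem (hx : x ∈ Ico (0:ℝ) 1) (n : ℕ) : (Tb β)^[n] x ∈ Ico (0:ℝ) 1 := by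
  cases n with
  | zero => exact hx
  | succ n => rw [Function.iterate_succ_apply']; exact Tb_mem _

lemma iter_succ_eq (n : ℕ) :
    (Tb β)^[n+1] x = β * (Tb β)^[n] x - dig β x n := by
  rw [Function.iterate_succ_apply']
  simp only [Tb, dig, Int.fract]

lemma conv_zero : conv β x 0 = 0 := Finset.sum_range_zero _

lemma conv_succ (n : ℕ) :
    conv β x (n+1) = conv β x n + (dig β x n : ℝ) / β ^ (n+1) :=
  Finset.sum_range_succ _ _

lemma conv_add_iter (hb : 0 < β) (x : ℝ) (n : ℕ) :
    conv β x n + (β ^ n)⁻¹ * (Tb β)^[n] x = x := by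
  induction n with
  | zero => simp [conv_zero]
  | succ n ih =>
      rw [conv_succ, iter_succ_eq]
      have hbn : (β:ℝ)^n ≠ 0 := pow_ne_zero _ (ne_of_gt hb)
      have hbn1 : (β:ℝ)^(n+1) ≠ 0 := pow_ne_zero _ (ne_of_gt hb)
      have hre : (β ^ (n+1))⁻¹ * (β * (Tb β)^[n] x - dig β x n)
          = (β ^ n)⁻¹ * (Tb β)^[n] x - (dig β x n : ℝ) / β ^ (n+1) := by
        field_simp
        ring
      linarith [ih, hre]

lemma iter_lt_tf (hβ : 1 < β) (hx : x ∈ Ico (0:ℝ) 1) (n : ℕ) :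
    (Tb β)^[n] x < tf β x n := by
  have hb : 0 < β := lt_trans one_pos hβ
  induction n with
  | zero => exact hx.2
  | succ n ih =>
      rw [iter_succ_eq, tf_succ]
      refine lt_min ?_ ?_
      · have h2 := (iter_mem (β := β) hx (n+1)).2
        rw [iter_succ_eq] at h2; exact h2
      · have := mul_lt_mul_of_pos_left ih hb
        linarith

lemma tf_le_one (n : ℕ) : tf β x n ≤ 1 := by
  cases n with
  | zero => exact le_refl 1
  | succ n => exact min_le_left _ _

lemma tf_pos (hβ : 1 < β) (hx : x ∈ Ico (0:ℝ) 1) (n : ℕ) : 0 < tf β x n :=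
  lt_of_le_of_lt (iter_mem hx n).1 (iter_lt_tf hβ hx n)

lemma dig_nonneg (hb : 0 < β) (hx : x ∈ Ico (0:ℝ) 1) (n : ℕ) : 0 ≤ dig β x n :=
  Int.floor_nonneg.2 (mul_nonneg hb.le (iter_mem hx n).1)

lemma dig_lt (hβ : 1 < β) (hx : x ∈ Ico (0:ℝ) 1) (n : ℕ) :
    (dig β x n : ℝ) < β * tf β x n :=
  (Int.floor_le _).trans_lt (mul_lt_mul_of_pos_left (iter_lt_tf hβ hx n) (lt_trans one_pos hβ))

lemma conv_mono (hb : 0 < β) (hx : x ∈ Ico (0:ℝ) 1) {i j : ℕ} (h : i ≤ j) :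
    conv β x i ≤ conv β x j := by
  apply Finset.sum_le_sum_of_subset_of_nonneg (Finset.range_subset_range.2 h)
  intro k _ _
  exact div_nonneg (by exact_mod_cast dig_nonneg hb hx k) (pow_pos hb _).le

lemma conv_nonneg (hb : 0 < β) (hx : x ∈ Ico (0:ℝ) 1) (n : ℕ) : 0 ≤ conv β x n := by
  have := conv_mono hb hx (Nat.zero_le n)
  simpa [conv] using this

lemma conv_le_self (hb : 0 < β) (hx : x ∈ Ico (0:ℝ) 1) (n : ℕ) : conv β x n ≤ x := by
  have h := conv_add_iter hb x n
  have h2 : 0 ≤ (β ^ n)⁻¹ * (Tb β)^[n] x :=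
    mul_nonneg (inv_nonneg.2 (pow_pos hb n).le) (iter_mem hx n).1
  linarith

lemma lt_ee (hβ : 1 < β) (hx : x ∈ Ico (0:ℝ) 1) (n : ℕ) : x < ee β x n := by
  have hb : 0 < β := lt_trans one_pos hβ
  have h := conv_add_iter hb x n
  have h2 : (β ^ n)⁻¹ * (Tb β)^[n] x < (β ^ n)⁻¹ * tf β x n :=
    mul_lt_mul_of_pos_left (iter_lt_tf hβ hx n) (inv_pos.2 (pow_pos hb n))
  unfold ee; linarith

lemma conv_lt_ee (hβ : 1 < β) (hx : x ∈ Ico (0:ℝ) 1) (n : ℕ) : conv β x n < ee β x n := by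
  have hb : 0 < β := lt_trans one_pos hβ
  have := mul_pos (inv_pos.2 (pow_pos hb n)) (tf_pos hβ hx n)
  unfold ee; linarith

lemma ee_le_add (hβ : 1 < β) (hx : x ∈ Ico (0:ℝ) 1) (n : ℕ) : ee β x n ≤ x + (β ^ n)⁻¹ := by
  have hb : 0 < β := lt_trans one_pos hβ
  have h1 := conv_le_self hb hx n
  have h2 : (β ^ n)⁻¹ * tf β x n ≤ (β ^ n)⁻¹ * 1 :=
    mul_le_mul_of_nonneg_left (tf_le_one n) (inv_pos.2 (pow_pos hb n)).le
  unfold ee; linarith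

lemma ee_succ_le (hβ : 1 < β) (hx : x ∈ Ico (0:ℝ) 1) (n : ℕ) : ee β x (n+1) ≤ ee β x n := by
  have hb : 0 < β := lt_trans one_pos hβ
  have hbn : (β:ℝ)^n ≠ 0 := pow_ne_zero _ (ne_of_gt hb)
  have hkey : (dig β x n : ℝ) + min 1 (β * tf β x n - dig β x n) ≤ β * tf β x n := by
    have := min_le_right (1:ℝ) (β * tf β x n - dig β x n); linarith
  have hp : (0:ℝ) < (β ^ (n+1))⁻¹ := inv_pos.2 (pow_pos hb _)
  unfold ee
  rw [conv_succ, tf_succ]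
  have h2 : (β ^ (n+1))⁻¹ * ((dig β x n : ℝ) + min 1 (β * tf β x n - dig β x n))
      ≤ (β ^ (n+1))⁻¹ * (β * tf β x n) := mul_le_mul_of_nonneg_left hkey hp.le
  have h3 : (β ^ (n+1))⁻¹ * (β * tf β x n) = (β ^ n)⁻¹ * tf β x n := by
    rw [pow_succ]; field_simp
  have h4 : (dig β x n : ℝ) / β ^ (n+1) = (β ^ (n+1))⁻¹ * (dig β x n : ℝ) := by ring
  rw [h4]
  nlinarith [h2, h3]

lemma ee_antitone (hβ : 1 < β) (hx : x ∈ Ico (0:ℝ) 1) {i j : ℕ} (h : i ≤ j) :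
    ee β x j ≤ ee β x i := by
  induction j, h using Nat.le_induction with
  | base => exact le_refl _
  | succ j hj ih => exact (ee_succ_le hβ hx j).trans ih

lemma ee_zero : ee β x 0 = 1 := by simp [ee, conv_zero, tf_zero]

lemma ee_le_one (hβ : 1 < β) (hx : x ∈ Ico (0:ℝ) 1) (n : ℕ) : ee β x n ≤ 1 := by
  have := ee_antitone hβ hx (Nat.zero_le n); rwa [ee_zero] at this

lemma ee_succ_eq (hx : x ∈ Ico (0:ℝ) 1) (n : ℕ) (h : tf β x (n+1) < 1) (hb : 0 < β) :
    ee β x (n+1) = ee β x n := by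
  have hmin : tf β x (n+1) = β * tf β x n - dig β x n := by
    rw [tf_succ] at h ⊢
    rcases min_lt_iff.1 h with h1 | h1
    · exact absurd h1 (lt_irrefl _)
    · exact min_eq_right h1.le
  unfold ee
  rw [conv_succ, hmin]
  have hbn : (β:ℝ)^n ≠ 0 := pow_ne_zero _ (ne_of_gt hb)
  field_simp
  ring

lemma tf_congr {n : ℕ} (h : ∀ k < n, dig β y k = dig β x k) : tf β y n = tf β x n := by
  induction n with
  | zero => rfl
  | succ n ih =>
      rw [tf_succ, tf_succ, ih (fun k hk => h k (hk.trans n.lt_succ_self)),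
        h n n.lt_succ_self]

lemma conv_congr {n : ℕ} (h : ∀ k < n, dig β y k = dig β x k) : conv β y n = conv β x n := by
  induction n with
  | zero => rw [conv_zero, conv_zero]
  | succ n ih =>
      rw [conv_succ, conv_succ, ih (fun k hk => h k (hk.trans n.lt_succ_self)),
        h n n.lt_succ_self]


lemma scale_le_iff (hb : 0 < β) (n : ℕ) {A u : ℝ} :
    (β ^ (n+1))⁻¹ * A ≤ (β ^ n)⁻¹ * u ↔ A ≤ β * u := by
  have h2 : (0:ℝ) < β ^ (n+1) := pow_pos hb (n+1)
  have key : (β ^ n)⁻¹ * u = (β ^ (n+1))⁻¹ * (β * u) := by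
    rw [pow_succ]; field_simp
  rw [key]
  exact mul_le_mul_iff_right₀ (inv_pos.2 h2)

lemma scale_lt_iff (hb : 0 < β) (n : ℕ) {A u : ℝ} :
    (β ^ n)⁻¹ * u < (β ^ (n+1))⁻¹ * A ↔ β * u < A := by
  have h2 : (0:ℝ) < β ^ (n+1) := pow_pos hb (n+1)
  have key : (β ^ n)⁻¹ * u = (β ^ (n+1))⁻¹ * (β * u) := by
    rw [pow_succ]; field_simp
  rw [key]
  exact mul_lt_mul_iff_right₀ (inv_pos.2 h2)

lemma mem_cyl_iff (hβ : 1 < β) (hx : x ∈ Ico (0:ℝ) 1) (n : ℕ) (y : ℝ) :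
    (y ∈ Ico (0:ℝ) 1 ∧ ∀ k < n, dig β y k = dig β x k) ↔
      y ∈ Ico (conv β x n) (ee β x n) := by
  have hb : 0 < β := lt_trans one_pos hβ
  induction n with
  | zero => simp [conv_zero, ee_zero]
  | succ n ih =>
      constructor
      · rintro ⟨hy01, hd⟩
        have hdn : ∀ k < n, dig β y k = dig β x k := fun k hk => hd k (hk.trans n.lt_succ_self)
        have hceq : conv β y n = conv β x n := conv_congr hdn
        have hteq : tf β y n = tf β x n := tf_congr hdn
        have hy_eq : conv β x n + (β ^ n)⁻¹ * (Tb β)^[n] y = y := by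
          rw [← hceq]; exact conv_add_iter hb y n
        have hfl : (dig β x n : ℝ) ≤ β * (Tb β)^[n] y := by
          rw [← hd n n.lt_succ_self]; exact Int.floor_le _
        have hfu : β * (Tb β)^[n] y < (dig β x n : ℝ) + 1 := by
          rw [← hd n n.lt_succ_self]; exact Int.lt_floor_add_one _
        have hub : β * (Tb β)^[n] y < β * tf β x n := by
          rw [← hteq]; exact mul_lt_mul_of_pos_left (iter_lt_tf hβ hy01 n) hb
        have hdiv : (dig β x n : ℝ) / β ^ (n+1) = (β ^ (n+1))⁻¹ * (dig β x n : ℝ) := by ring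
        constructor
        · rw [conv_succ]
          have h5 := (scale_le_iff hb n).2 hfl
          linarith [hy_eq]
        · have hlt : β * (Tb β)^[n] y
              < (dig β x n : ℝ) + min 1 (β * tf β x n - (dig β x n : ℝ)) := by
            rcases le_or_gt 1 (β * tf β x n - (dig β x n : ℝ)) with hc | hc
            · rw [min_eq_left hc]; linarith
            · rw [min_eq_right hc.le]; linarith
          have h5 := (scale_lt_iff hb n).2 hlt
          unfold ee; rw [conv_succ, tf_succ]
          have hmuladd : (β ^ (n+1))⁻¹ * ((dig β x n : ℝ) + min 1 (β * tf β x n - (dig β x n : ℝ)))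
              = (β ^ (n+1))⁻¹ * (dig β x n : ℝ)
                + (β ^ (n+1))⁻¹ * min 1 (β * tf β x n - (dig β x n : ℝ)) := by ring
          linarith [hy_eq]
      · rintro ⟨h1, h2⟩
        have hcc : conv β x n ≤ conv β x (n+1) := conv_mono hb hx n.le_succ
        have hprev : y ∈ Ico (conv β x n) (ee β x n) :=
          ⟨le_trans hcc h1, lt_of_lt_of_le h2 (ee_succ_le hβ hx n)⟩
        obtain ⟨hy01, hdn⟩ := ih.2 hprev
        have hceq : conv β y n = conv β x n := conv_congr hdn
        have hy_eq : conv β x n + (β ^ n)⁻¹ * (Tb β)^[n] y = y := by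
          rw [← hceq]; exact conv_add_iter hb y n
        have hdiv : (dig β x n : ℝ) / β ^ (n+1) = (β ^ (n+1))⁻¹ * (dig β x n : ℝ) := by ring
        have hfl : (dig β x n : ℝ) ≤ β * (Tb β)^[n] y := by
          apply (scale_le_iff hb n).1
          rw [conv_succ] at h1
          linarith [hy_eq]
        have hfu : β * (Tb β)^[n] y < (dig β x n : ℝ) + tf β x (n+1) := by
          apply (scale_lt_iff hb n).1
          unfold ee at h2; rw [conv_succ] at h2
          have hmuladd : (β ^ (n+1))⁻¹ * ((dig β x n : ℝ) + tf β x (n+1))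
              = (β ^ (n+1))⁻¹ * (dig β x n : ℝ) + (β ^ (n+1))⁻¹ * tf β x (n+1) := by ring
          linarith [hy_eq]
        have hdig : dig β y n = dig β x n := by
          apply Int.floor_eq_iff.2
          constructor
          · exact hfl
          · push_cast
            have := tf_le_one (β := β) (x := x) (n+1)
            linarith
        refine ⟨hy01, fun k hk => ?_⟩
        rcases Nat.lt_succ_iff_lt_or_eq.1 hk with hlt | heq
        · exact hdn k hlt
        · rw [heq]; exact hdig


open scoped Classical in
noncomputable def kf (β x : ℝ) (n : ℕ) : ℕ := Nat.findGreatest (fun j => 1 ≤ tf β x j) n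

lemma kf_le (n : ℕ) : kf β x n ≤ n := Nat.findGreatest_le n

lemma tf_kf (n : ℕ) : tf β x (kf β x n) = 1 := by
  refine le_antisymm (tf_le_one _) ?_
  unfold kf
  exact Nat.findGreatest_spec (P := fun j => 1 ≤ tf β x j) (Nat.zero_le n) (by show (1:ℝ) ≤ tf β x 0; rw [tf_zero])

lemma tf_lt_of_kf_lt {n j : ℕ} (h1 : kf β x n < j) (h2 : j ≤ n) : tf β x j < 1 := by
  classical
  unfold kf at h1
  exact not_le.1 (Nat.findGreatest_is_greatest h1 h2)

lemma le_kf {n j : ℕ} (h1 : j ≤ n) (h2 : tf β x j = 1) : j ≤ kf β x n := by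
  unfold kf
  exact Nat.le_findGreatest h1 (le_of_eq h2.symm)

lemma ee_eq_ee_kf (hβ : 1 < β) (hx : x ∈ Ico (0:ℝ) 1) (n : ℕ) :
    ee β x n = ee β x (kf β x n) := by
  have hb : 0 < β := lt_trans one_pos hβ
  have main : ∀ j, kf β x n ≤ j → j ≤ n → ee β x j = ee β x (kf β x n) := by
    intro j hj hjn
    induction j, hj using Nat.le_induction with
    | base => rfl
    | succ j hj ih =>
        rw [ee_succ_eq hx j (tf_lt_of_kf_lt (Nat.lt_succ_of_le hj) hjn) hb]
        exact ih (le_trans (Nat.le_succ j) hjn)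
  exact main n (kf_le n) le_rfl

lemma Tb_zero : Tb β 0 = 0 := by simp [Tb]

lemma next (hβ : 1 < β) (hx : x ∈ Ico (0:ℝ) 1) (n : ℕ) (hr : ee β x n < 1) :
    ee β x n ∈ Ico (0:ℝ) 1 ∧ (Tb β)^[n] (ee β x n) = 0 ∧
      (tf β (ee β x n) n < 1 → kf β (ee β x n) n < kf β x n) := by
  classical
  have hb : 0 < β := lt_trans one_pos hβ
  set r := ee β x n with hrdef
  have hr0 : 0 ≤ r := by
    have h1 := conv_nonneg hb hx n
    have h2 := conv_lt_ee hβ hx n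
    linarith
  have hr01 : r ∈ Ico (0:ℝ) 1 := ⟨hr0, hr⟩
  have hP : ∃ j, ee β x j ≤ r := ⟨n, le_of_eq hrdef.symm⟩
  have hm0 : Nat.find hP ≠ 0 := by
    intro h0
    have := Nat.find_spec hP
    rw [h0, ee_zero] at this
    linarith
  obtain ⟨m', hm'⟩ : ∃ m', Nat.find hP = m' + 1 := Nat.exists_eq_succ_of_ne_zero hm0
  have hmn : m' + 1 ≤ n := by
    rw [← hm']; exact Nat.find_min' hP (le_of_eq hrdef.symm)
  have hem : ee β x (m' + 1) = r := by
    have h1 : ee β x (m' + 1) ≤ r := by rw [← hm']; exact Nat.find_spec hP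
    have h2 : r ≤ ee β x (m' + 1) := hrdef ▸ ee_antitone hβ hx hmn
    exact le_antisymm h1 h2
  have hem' : r < ee β x m' := by
    have := Nat.find_min hP (show m' < Nat.find hP by omega)
    exact not_le.1 this
  have hconvle : conv β x m' ≤ r := by
    have h1 := conv_mono hb hx (le_trans (Nat.le_succ m') hmn)
    have h2 := conv_lt_ee hβ hx n
    rw [hrdef]; linarith
  obtain ⟨hr01', hdigs⟩ := (mem_cyl_iff hβ hx m' r).2 ⟨hconvle, hem'⟩
  have hc : conv β r m' = conv β x m' := conv_congr hdigs
  have ht : tf β r m' = tf β x m' := tf_congr hdigs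
  set u := (Tb β)^[m'] r with hudef
  have e1 : conv β x m' + (β ^ m')⁻¹ * u = r := by
    rw [← hc]; exact conv_add_iter hb r m'
  have e2 : r = conv β x m' + (dig β x m' : ℝ) / β ^ (m'+1) + (β ^ (m'+1))⁻¹ * tf β x (m'+1) := by
    rw [← hem]; unfold ee; rw [conv_succ]
  have hbn : (β:ℝ)^m' ≠ 0 := pow_ne_zero _ (ne_of_gt hb)
  have hbn1 : (β:ℝ)^(m'+1) ≠ 0 := pow_ne_zero _ (ne_of_gt hb)
  have key : β * u = (dig β x m' : ℝ) + tf β x (m'+1) := by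
    have e3 : (β ^ m')⁻¹ * u
        = (dig β x m' : ℝ) / β ^ (m'+1) + (β ^ (m'+1))⁻¹ * tf β x (m'+1) := by linarith
    field_simp [pow_succ] at e3
    have e4 : (β * u) * β ^ m' = ((dig β x m' : ℝ) + tf β x (m'+1)) * β ^ m' := by
      linear_combination e3
    exact mul_right_cancel₀ hbn e4
  have htp1 : tf β x (m'+1) = 1 := by
    by_contra hne
    have htlt : tf β x (m'+1) < 1 := (tf_le_one _).lt_of_ne hne
    have htpos : 0 < tf β x (m'+1) := tf_pos hβ hx (m'+1)
    have hflr : dig β r m' = dig β x m' := by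
      have hrfl : dig β r m' = ⌊β * u⌋ := rfl
      rw [hrfl, key, add_comm, Int.floor_add_intCast,
        Int.floor_eq_zero_iff.2 ⟨htpos.le, htlt⟩, zero_add]
    have hfr : (Tb β)^[m'+1] r = tf β x (m'+1) := by
      rw [Function.iterate_succ_apply', ← hudef]
      show Int.fract (β * u) = _
      rw [key, add_comm, Int.fract_add_intCast]
      exact Int.fract_eq_self.2 ⟨htpos.le, htlt⟩
    have hcontr := iter_lt_tf hβ hr01 (m'+1)
    rw [hfr] at hcontr
    have : tf β r (m'+1) = tf β x (m'+1) := by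
      rw [tf_succ, tf_succ, ht, hflr]
    rw [this] at hcontr
    exact lt_irrefl _ hcontr
  have hTm : (Tb β)^[m'+1] r = 0 := by
    rw [Function.iterate_succ_apply', ← hudef]
    show Int.fract (β * u) = 0
    rw [key, htp1]
    have : ((dig β x m' : ℝ) + 1) = ((dig β x m' + 1 : ℤ) : ℝ) := by push_cast; ring
    rw [this, Int.fract_intCast]
  have hiter0 : ∀ i, (Tb β)^[m' + 1 + i] r = 0 := by
    intro i
    induction i with
    | zero => exact hTm
    | succ i ih =>
        have : m' + 1 + (i + 1) = (m' + 1 + i) + 1 := by ring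
        rw [this, Function.iterate_succ_apply', ih, Tb_zero]
  have hTn : (Tb β)^[n] r = 0 := by
    have := hiter0 (n - (m' + 1))
    rwa [Nat.add_sub_cancel' hmn] at this
  refine ⟨hr01, hTn, ?_⟩
  intro hfull
  -- digits of r are 0 from m'+1 on
  have hdig0 : ∀ j, m' + 1 ≤ j → dig β r j = 0 := by
    intro j hj
    unfold dig
    have : (Tb β)^[j] r = 0 := by
      have := hiter0 (j - (m' + 1))
      rwa [Nat.add_sub_cancel' hj] at this
    rw [this]
    simp
  -- tf of r is monotone from m'+1 on
  have htmono : ∀ i j, m' + 1 ≤ i → i ≤ j → tf β r i ≤ tf β r j := by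
    intro i j hi hij
    induction j, hij using Nat.le_induction with
    | base => exact le_refl _
    | succ j hj ih =>
        have hstep : tf β r j ≤ tf β r (j+1) := by
          rw [tf_succ, hdig0 j (le_trans hi hj)]
          push_cast
          refine le_min (tf_le_one _) ?_
          have h1 : 0 < tf β r j := tf_pos hβ hr01 j
          nlinarith
        exact le_trans ih hstep
  have h1 : kf β r n ≤ m' := by
    by_contra hcon
    push_neg at hcon
    have h2 : tf β r (kf β r n) = 1 := tf_kf n
    have h3 : tf β r (kf β r n) ≤ tf β r n := htmono _ _ hcon (kf_le n)
    rw [h2] at h3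
    linarith
  have h2 : m' + 1 ≤ kf β x n := by
    rw [← hm']
    apply Nat.find_min' hP
    rw [hrdef]
    exact le_of_eq (ee_eq_ee_kf hβ hx n).symm
  omega


lemma conv_eq_self_of_iter_zero (hb : 0 < β) {n : ℕ} (h0 : (Tb β)^[n] x = 0) :
    conv β x n = x := by
  have := conv_add_iter hb x n
  rw [h0] at this
  simpa using this

lemma walk (hβ : 1 < β) (n : ℕ) (K : ℕ) :
    ∀ x : ℝ, x ∈ Ico (0:ℝ) 1 → (Tb β)^[n] x = 0 → kf β x n ≤ K →
    (∃ y, y ∈ Ico (0:ℝ) 1 ∧ tf β y n = 1 ∧ x ≤ conv β y n ∧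
        conv β y n + (β ^ n)⁻¹ ≤ x + ((K : ℝ) + 1) * (β ^ n)⁻¹)
    ∨ (1:ℝ) ≤ x + ((K : ℝ) + 1) * (β ^ n)⁻¹ := by
  have hb : 0 < β := lt_trans one_pos hβ
  have hp : (0:ℝ) < (β ^ n)⁻¹ := inv_pos.2 (pow_pos hb n)
  induction K with
  | zero =>
      intro x hx hx0 hk
      have hxc : conv β x n = x := conv_eq_self_of_iter_zero hb hx0
      by_cases hf : tf β x n = 1
      · left
        exact ⟨x, hx, hf, le_of_eq hxc.symm, by rw [hxc]; push_cast; linarith⟩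
      · right
        have h1 : ee β x n = 1 := by
          rw [ee_eq_ee_kf hβ hx n, Nat.le_zero.mp hk, ee_zero]
        have h2 : ee β x n ≤ x + (β ^ n)⁻¹ := ee_le_add hβ hx n
        push_cast
        linarith
  | succ K ih =>
      intro x hx hx0 hk
      have hxc : conv β x n = x := conv_eq_self_of_iter_zero hb hx0
      have hKc : (0:ℝ) ≤ (K : ℝ) := Nat.cast_nonneg K
      by_cases hf : tf β x n = 1
      · left
        exact ⟨x, hx, hf, le_of_eq hxc.symm, by rw [hxc]; push_cast; nlinarith⟩
      · have hrle : ee β x n ≤ x + (β ^ n)⁻¹ := ee_le_add hβ hx n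
        by_cases hr1 : ee β x n < 1
        · obtain ⟨hr01, hru0, hdec⟩ := next hβ hx n hr1
          have hrc : conv β (ee β x n) n = ee β x n := conv_eq_self_of_iter_zero hb hru0
          have hxr : x < ee β x n := lt_ee hβ hx n
          by_cases hrf : tf β (ee β x n) n = 1
          · left
            refine ⟨ee β x n, hr01, hrf, ?_, ?_⟩
            · rw [hrc]; exact hxr.le
            · rw [hrc]; push_cast; nlinarith
          · have h' : kf β (ee β x n) n ≤ K := by
              have := hdec ((tf_le_one _).lt_of_ne hrf)
              omega
            rcases ih (ee β x n) hr01 hru0 h' with ⟨y, hy, hyf, hyl, hyr⟩ | hbad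
            · left
              refine ⟨y, hy, hyf, le_trans hxr.le hyl, ?_⟩
              push_cast
              push_cast at hyr
              nlinarith
            · right
              push_cast
              push_cast at hbad
              nlinarith
        · right
          push_neg at hr1
          push_cast
          nlinarith

end BetaAux

/-- any interval J ⊂ [0,1] with (n+1)β^{−n} < |J| contains a full cylinder of order n. -/
theorem stmt5 (β : ℝ) (hβ : 1 < β) (J : Set ℝ) (hJ : J ⊆ Set.Icc 0 1)
    (hJc : J.OrdConnected) (n : ℕ)
    (h : (n + 1 : ℝ) * (β ^ n)⁻¹ < Metric.diam J) :
    ∃ w : Fin n → ℤ, cyl β w ⊆ J ∧ volume (cyl β w) = ENNReal.ofReal ((β ^ n)⁻¹) := by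
  classical
  open BetaAux in
  have hb : 0 < β := lt_trans one_pos hβ
  have hp : (0:ℝ) < (β ^ n)⁻¹ := inv_pos.2 (pow_pos hb n)
  -- J is nonempty
  have hne : J.Nonempty := by
    rw [nonempty_iff_ne_empty]
    rintro rfl
    rw [Metric.diam_empty] at h
    nlinarith [Nat.cast_nonneg (α := ℝ) n]
  have hbdd : BddAbove J := ⟨1, fun z hz => (hJ hz).2⟩
  have hbddb : BddBelow J := ⟨0, fun z hz => (hJ hz).1⟩
  set a := sInf J with hadef
  set b := sSup J with hbdef
  have hab : a ≤ b := csInf_le_csSup hne hbddb hbdd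
  have hsub : J ⊆ Icc a b := fun z hz => ⟨csInf_le hbddb hz, le_csSup hbdd hz⟩
  have hdiam : Metric.diam J ≤ b - a :=
    le_of_le_of_eq (Metric.diam_mono hsub (Metric.isBounded_Icc a b)) (Real.diam_Icc hab)
  have hlt : (n + 1 : ℝ) * (β ^ n)⁻¹ < b - a := lt_of_lt_of_le h hdiam
  have hb1 : b ≤ 1 := csSup_le hne fun z hz => (hJ hz).2
  have ha0 : 0 ≤ a := le_csInf hne fun z hz => (hJ hz).1
  -- n ≥ 1
  have hn : 1 ≤ n := by
    by_contra hcon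
    push_neg at hcon
    interval_cases n
    simp at hlt
    linarith
  -- pick x₀ ∈ J with x₀ < b - (n+1)(β^n)⁻¹
  obtain ⟨x₀, hx₀J, hx₀lt⟩ : ∃ x₀ ∈ J, x₀ < b - (n + 1 : ℝ) * (β ^ n)⁻¹ := by
    by_contra hcon
    push_neg at hcon
    have := le_csInf hne hcon
    rw [← hadef] at this
    linarith
  have hx₀0 : 0 ≤ x₀ := (hJ hx₀J).1
  have hinvle : (β ^ n)⁻¹ ≤ (n + 1 : ℝ) * (β ^ n)⁻¹ := by
    nlinarith [Nat.cast_nonneg (α := ℝ) n]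
  have hx₀1 : x₀ < 1 := by linarith
  have hx₀ : x₀ ∈ Ico (0:ℝ) 1 := ⟨hx₀0, hx₀1⟩
  set r₀ := ee β x₀ n with hr₀def
  have hr₀le : r₀ ≤ x₀ + (β ^ n)⁻¹ := ee_le_add hβ hx₀ n
  have hr₀1 : r₀ < 1 := by linarith
  obtain ⟨hr01, hru0, hdec⟩ := next hβ hx₀ n hr₀1
  rw [← hr₀def] at hr01 hru0 hdec
  have hr₀conv : conv β r₀ n = r₀ := conv_eq_self_of_iter_zero hb hru0
  have hx₀r : x₀ < r₀ := lt_ee hβ hx₀ n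
  -- main producer
  have main : ∀ y, y ∈ Ico (0:ℝ) 1 → tf β y n = 1 → r₀ ≤ conv β y n →
      conv β y n + (β ^ n)⁻¹ ≤ x₀ + (n + 1 : ℝ) * (β ^ n)⁻¹ →
      ∃ w : Fin n → ℤ, cyl β w ⊆ J ∧ volume (cyl β w) = ENNReal.ofReal ((β ^ n)⁻¹) := by
    intro y hy hyf hyl hyr
    have hset : cyl β (fun k : Fin n => dig β y k)
        = Ico (conv β y n) (conv β y n + (β ^ n)⁻¹) := by
      ext z
      have hiff := mem_cyl_iff hβ hy n z
      have hee : ee β y n = conv β y n + (β ^ n)⁻¹ := by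
        unfold BetaAux.ee; rw [hyf, mul_one]
      rw [hee] at hiff
      constructor
      · rintro ⟨hz01, hzd⟩
        exact hiff.1 ⟨hz01, fun k hk => hzd ⟨k, hk⟩⟩
      · intro hz
        obtain ⟨hz01, hzd⟩ := hiff.2 hz
        exact ⟨hz01, fun k => hzd k k.isLt⟩
    refine ⟨fun k => dig β y k, ?_, ?_⟩
    · rw [hset]
      intro z hz
      have hzb : z < b := by
        have h1 : z < conv β y n + (β ^ n)⁻¹ := hz.2
        linarith
      have hx₀z : x₀ ≤ z := le_trans hx₀r.le (le_trans hyl hz.1)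
      obtain ⟨w', hw'J, hzw'⟩ := exists_lt_of_lt_csSup hne hzb
      exact hJc.out hx₀J hw'J ⟨hx₀z, hzw'.le⟩
    · rw [hset, Real.volume_Ico]
      congr 1
      ring
  by_cases hfull : tf β r₀ n = 1
  · apply main r₀ hr01 hfull (le_of_eq hr₀conv.symm)
    rw [hr₀conv]
    have : (2:ℝ) ≤ (n:ℝ) + 1 := by
      have : (1:ℝ) ≤ (n:ℝ) := by exact_mod_cast hn
      linarith
    nlinarith
  · have hfull' : tf β r₀ n < 1 := (tf_le_one _).lt_of_ne hfull
    have hk : kf β r₀ n ≤ n - 1 := by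
      have h1 := hdec hfull'
      have h2 := kf_le (β := β) (x := x₀) n
      omega
    have hcast : ((n - 1 : ℕ) : ℝ) = (n : ℝ) - 1 := by
      rw [Nat.cast_sub hn]; norm_num
    rcases walk hβ n (n - 1) r₀ hr01 hru0 hk with ⟨y, hy, hyf, hyl, hyr⟩ | hbad
    · apply main y hy hyf hyl
      rw [hcast] at hyr
      linarith
    · exfalso
      rw [hcast] at hbad
      linarith
end

section
/- Let β > 1, let ψ : ℕ → (0,∞), fix n with 0 < ψ(n) < 1 and δ ∈ (0,1), and let k be an integer with (k+1)β^{−k} ≤ δ·ψ(n). Then there exists a full cylinder of order k contained in the interval ((1−δ)ψ(n), ψ(n)). Moreover, if additionally ψ(n) < β^{−(t+1)} fails, i.e., if t is the integer with β^{−(t+1)} ≤ ψ(n) < β^{−t}, then the word defining this cylinder begins with at least t zeros. -/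
open Filter MeasureTheory Set

namespace Stmt17aux

noncomputable def xs (β t : ℝ) (k : ℕ) : ℕ → ℝ
  | 0 => t
  | j+1 => min (Int.fract (β * xs β t k j)) (1 - (β ^ (k - 1 - j))⁻¹)

noncomputable def ws (β t : ℝ) (k : ℕ) (j : ℕ) : ℤ := ⌊β * xs β t k j⌋

noncomputable def As (β t : ℝ) (k j : ℕ) : ℝ :=
  ∑ m ∈ Finset.range (k - j), (ws β t k (j + m) : ℝ) / β ^ (m + 1)

variable {β t : ℝ} {k : ℕ}

lemma xs_nonneg (hβ : 1 < β) (ht : 0 ≤ t) : ∀ j, 0 ≤ xs β t k j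
  | 0 => ht
  | j+1 => by
    have h1 : (0:ℝ) ≤ Int.fract (β * xs β t k j) := Int.fract_nonneg _
    have h2 : (β ^ (k-1-j))⁻¹ ≤ 1 := by
      rw [inv_le_one_iff₀]
      right; exact one_le_pow₀ hβ.le
    simp only [xs, le_min_iff]
    exact ⟨h1, by linarith⟩

lemma xs_lt_one (hβ : 1 < β) (ht1 : t < 1) : ∀ j, xs β t k j < 1
  | 0 => ht1
  | j+1 => lt_of_le_of_lt (min_le_left _ _) (Int.fract_lt_one _)

lemma xs_succ_le (j : ℕ) : xs β t k (j+1) ≤ 1 - (β ^ (k - 1 - j))⁻¹ :=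
  min_le_right _ _

lemma ws_nonneg (hβ : 1 < β) (ht : 0 ≤ t) (j : ℕ) : 0 ≤ ws β t k j :=
  Int.floor_nonneg.2 (mul_nonneg (by linarith) (xs_nonneg hβ ht j))

lemma ws_le (hβ : 1 < β) (j : ℕ) : (ws β t k j : ℝ) ≤ β * xs β t k j :=
  Int.floor_le _

lemma As_succ (hβ : 1 < β) {j : ℕ} (hj : j < k) :
    As β t k j = ((ws β t k j : ℝ) + As β t k (j+1)) / β := by
  have hβ0 : β ≠ 0 := by positivity
  have hkj : k - j = (k - (j+1)) + 1 := by omega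
  rw [As, hkj, Finset.sum_range_succ']
  have : ∀ m, (ws β t k (j + (m+1)) : ℝ) / β ^ (m + 1 + 1)
      = ((ws β t k (j + 1 + m) : ℝ) / β ^ (m + 1)) / β := by
    intro m
    rw [show j + (m+1) = j + 1 + m by omega, pow_succ]
    ring
  simp only [this]
  rw [← Finset.sum_div, ← As]
  simp only [add_zero, pow_one]
  ring

lemma As_eq_zero {j : ℕ} (hj : k ≤ j) : As β t k j = 0 := by
  simp [As, Nat.sub_eq_zero_of_le hj]

lemma As_nonneg (hβ : 1 < β) (ht : 0 ≤ t) (j : ℕ) : 0 ≤ As β t k j := by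
  apply Finset.sum_nonneg
  intro m _
  have := ws_nonneg (t := t) (k := k) hβ ht (j + m)
  positivity

lemma As_le_xs (hβ : 1 < β) (ht : 0 ≤ t) : ∀ d j, k ≤ j + d → As β t k j ≤ xs β t k j := by
  intro d
  induction d with
  | zero => intro j hj; rw [As_eq_zero (by omega)]; exact xs_nonneg hβ ht j
  | succ d ih =>
    intro j hj
    rcases le_or_gt k j with h | h
    · rw [As_eq_zero h]; exact xs_nonneg hβ ht j
    · have hβ0 : (0:ℝ) < β := by linarith
      rw [As_succ hβ h, div_le_iff₀ hβ0]
      have h1 : As β t k (j+1) ≤ xs β t k (j+1) := ih (j+1) (by omega)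
      have h2 : xs β t k (j+1) ≤ Int.fract (β * xs β t k j) := min_le_left _ _
      have h3 : Int.fract (β * xs β t k j) = β * xs β t k j - (ws β t k j : ℝ) := by
        rw [ws]; exact (Int.self_sub_floor _).symm
      nlinarith

end Stmt17aux

namespace Stmt17aux

variable {β t : ℝ} {k : ℕ}

lemma fract_eq (r : ℝ) : Int.fract r = r - (⌊r⌋ : ℝ) := (Int.self_sub_floor r).symm

lemma deficit (hβ : 1 < β) (ht : 0 ≤ t) (hk1 : 1 ≤ k) :
    ∀ d j, j + d = k → (0 < d → xs β t k j - As β t k j < d * (β ^ d)⁻¹) := by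
  have key : ∀ d j, j + d = k →
      xs β t k j - As β t k j ≤ d * (β ^ d)⁻¹ ∧
      (0 < d → xs β t k j - As β t k j < d * (β ^ d)⁻¹) := by
    intro d
    induction d with
    | zero =>
      intro j hj
      obtain ⟨m, hm⟩ : ∃ m, j = m + 1 := ⟨j - 1, by omega⟩
      have h1 : xs β t k j ≤ 1 - (β ^ (k - 1 - m))⁻¹ := by rw [hm]; exact xs_succ_le m
      have h2 : k - 1 - m = 0 := by omega
      rw [h2] at h1
      simp only [pow_zero, inv_one] at h1
      have h3 : 0 ≤ xs β t k j := xs_nonneg hβ ht j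
      rw [As_eq_zero (by omega : k ≤ j)]
      constructor
      · simpa using by linarith
      · intro h; exact absurd h (by omega)
    | succ d ih =>
      intro j hj
      have hjk : j < k := by omega
      have hβ0 : (0:ℝ) < β := by linarith
      set c : ℝ := (β ^ (k - 1 - j))⁻¹ with hc
      have hd : k - 1 - j = d := by omega
      have hc0 : 0 < c := by rw [hc]; positivity
      set F : ℝ := Int.fract (β * xs β t k j) with hF
      have hFw : F = β * xs β t k j - (ws β t k j : ℝ) := by
        rw [hF, ws]; exact fract_eq _
      have hF1 : F < 1 := Int.fract_lt_one _
      have hx1 : xs β t k (j+1) = min F (1 - c) := by rw [xs, hF, hc, hd]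
      have hgap : F - xs β t k (j+1) < c := by
        rw [hx1]
        rcases le_total F (1 - c) with h | h
        · rw [min_eq_left h]; linarith
        · rw [min_eq_right h]; linarith
      have hIH : xs β t k (j+1) - As β t k (j+1) ≤ d * (β ^ d)⁻¹ :=
        (ih (j+1) (by omega)).1
      have hA : As β t k j = ((ws β t k j : ℝ) + As β t k (j+1)) / β := As_succ hβ hjk
      have hxj : xs β t k j = ((ws β t k j : ℝ) + F) / β := by
        rw [hFw]; field_simp; ring
      have hlt : xs β t k j - As β t k j < (c + d * (β ^ d)⁻¹) / β := by
        rw [hA, hxj]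
        rw [div_sub_div_same, div_lt_div_iff_of_pos_right hβ0]
        have := hgap
        have := hIH
        linarith
      have heq : (c + d * (β ^ d)⁻¹) / β = ((d:ℝ) + 1) * (β ^ (d+1))⁻¹ := by
        rw [hc, hd, pow_succ]
        field_simp
        ring
      rw [heq] at hlt
      push_cast
      constructor
      · push_cast at hlt ⊢; linarith
      · intro _; push_cast at hlt ⊢; linarith
  intro d j hj
  exact (key d j hj).2

lemma xs_le_geom (hβ : 1 < β) (ht : 0 ≤ t) : ∀ j, xs β t k j ≤ β ^ j * t
  | 0 => by simp [xs]
  | j+1 => by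
    have hβ0 : (0:ℝ) < β := by linarith
    have h1 : xs β t k (j+1) ≤ Int.fract (β * xs β t k j) := min_le_left _ _
    have h2 : Int.fract (β * xs β t k j) ≤ β * xs β t k j := by
      rw [fract_eq]
      have := ws_nonneg (t := t) (k := k) hβ ht j
      have : (0:ℝ) ≤ (ws β t k j : ℝ) := by exact_mod_cast this
      rw [ws] at this
      linarith
    have h3 : β * xs β t k j ≤ β * (β ^ j * t) :=
      mul_le_mul_of_nonneg_left (xs_le_geom hβ ht j) hβ0.le
    calc xs β t k (j+1) ≤ β * (β ^ j * t) := by linarith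
    _ = β ^ (j+1) * t := by ring

end Stmt17aux

namespace Stmt17aux

variable {β t : ℝ} {k : ℕ}

lemma Tb_iter_mem (y : ℝ) (hy : y ∈ Set.Ico (0:ℝ) 1) (j : ℕ) :
    (Tb β)^[j] y ∈ Set.Ico (0:ℝ) 1 := by
  induction j with
  | zero => simpa using hy
  | succ j ih =>
    rw [Function.iterate_succ_apply']
    exact ⟨Int.fract_nonneg _, Int.fract_lt_one _⟩

lemma expand (hβ : 1 < β) (y : ℝ) (j : ℕ) :
    y = (∑ i ∈ Finset.range j, (dig β y i : ℝ) / β ^ (i + 1)) + (β ^ j)⁻¹ * (Tb β)^[j] y := by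
  have hβ0 : β ≠ 0 := by positivity
  induction j with
  | zero => simp
  | succ j ih =>
    rw [Finset.sum_range_succ]
    have hit : (Tb β)^[j+1] y = β * (Tb β)^[j] y - (dig β y j : ℝ) := by
      rw [Function.iterate_succ_apply', Tb, fract_eq, dig]
    have hstep : (β ^ (j+1))⁻¹ * ((Tb β)^[j+1] y)
        = (β ^ j)⁻¹ * (Tb β)^[j] y - (dig β y j : ℝ) / β ^ (j+1) := by
      rw [hit, pow_succ]
      field_simp
    rw [hstep]
    linarith [ih]

/-- Main induction: points of `[A 0, A 0 + β^{-k})` have digits `ws`. -/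
lemma digits_eq (hβ : 1 < β) (ht : 0 ≤ t) {y : ℝ}
    (hy1 : As β t k 0 ≤ y) (hy2 : y < As β t k 0 + (β ^ k)⁻¹) :
    ∀ j, j ≤ k → (∀ i, i < j → dig β y i = ws β t k i) ∧
      (Tb β)^[j] y = β ^ j * (y - As β t k 0) + As β t k j := by
  have hβ0 : (0:ℝ) < β := by linarith
  intro j
  induction j with
  | zero =>
    intro _
    refine ⟨fun i hi => absurd hi (by omega), by simp⟩
  | succ j ih =>
    intro hj1
    have hjk : j < k := by omega
    obtain ⟨ihd, ihT⟩ := ih (by omega)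
    set z := (Tb β)^[j] y with hz
    have hAx : As β t k (j+1) ≤ xs β t k (j+1) := As_le_xs hβ ht k (j+1) (by omega)
    have hxb : xs β t k (j+1) ≤ 1 - (β ^ (k - 1 - j))⁻¹ := xs_succ_le j
    have hA1 : 0 ≤ As β t k (j+1) := As_nonneg hβ ht (j+1)
    -- β * z = ws j + u where u = β^{j+1}(y - a) + As (j+1)
    have hAj : As β t k j = ((ws β t k j : ℝ) + As β t k (j+1)) / β := As_succ hβ hjk
    set u : ℝ := β ^ (j+1) * (y - As β t k 0) + As β t k (j+1) with hu
    have hbz : β * z = (ws β t k j : ℝ) + u := by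
      rw [ihT, hAj, hu, pow_succ]
      field_simp
      ring
    have hpow : β ^ (j+1) * (β ^ k)⁻¹ = (β ^ (k - 1 - j))⁻¹ := by
      have hke : k = (j+1) + (k - 1 - j) := by omega
      rw [hke, pow_add]
      field_simp
      ring_nf
      rw [show 1 + j + (k - 1 - j) - 1 - j = k - 1 - j by omega]
    have hu0 : 0 ≤ u := by
      have : 0 ≤ β ^ (j+1) * (y - As β t k 0) := by
        have := sub_nonneg.2 hy1; positivity
      linarith
    have hu1 : u < 1 := by
      have h1 : β ^ (j+1) * (y - As β t k 0) < β ^ (j+1) * (β ^ k)⁻¹ := by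
        apply mul_lt_mul_of_pos_left _ (by positivity)
        linarith
      rw [hpow] at h1
      linarith
    have hdig : dig β y j = ws β t k j := by
      rw [dig, ← hz, hbz, Int.floor_eq_iff]
      constructor
      · linarith
      · push_cast; linarith
    refine ⟨fun i hi => ?_, ?_⟩
    · rcases Nat.lt_or_ge i j with h | h
      · exact ihd i h
      · have : i = j := by omega
        rw [this]; exact hdig
    · rw [Function.iterate_succ_apply', Tb, fract_eq, ← hz]
      have : (⌊β * z⌋ : ℝ) = (ws β t k j : ℝ) := by
        exact_mod_cast (by rw [dig, ← hz] at hdig; exact hdig : ⌊β * z⌋ = ws β t k j)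
      rw [this, hbz, hu, pow_succ]
      ring

end Stmt17aux

namespace Stmt17aux

variable {β t : ℝ} {k : ℕ}

lemma cyl_eq (hβ : 1 < β) (ht : 0 ≤ t) (hsum : t + (β ^ k)⁻¹ ≤ 1) :
    cyl β (fun j : Fin k => ws β t k j)
      = Set.Ico (As β t k 0) (As β t k 0 + (β ^ k)⁻¹) := by
  have hβ0 : (0:ℝ) < β := by linarith
  have hA0 : 0 ≤ As β t k 0 := As_nonneg hβ ht 0
  have hAt : As β t k 0 ≤ t := by
    have := As_le_xs (t := t) (k := k) hβ ht k 0 (by omega)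
    simpa [xs] using this
  apply Set.eq_of_subset_of_subset
  · -- cyl ⊆ Ico
    rintro y ⟨hy01, hdig⟩
    have hexp := expand hβ y k
    have hTk : (Tb β)^[k] y ∈ Set.Ico (0:ℝ) 1 := Tb_iter_mem y hy01 k
    have hsum_eq : (∑ i ∈ Finset.range k, (dig β y i : ℝ) / β ^ (i + 1)) = As β t k 0 := by
      rw [As]
      apply Finset.sum_congr (by simp)
      intro i hi
      rw [Finset.mem_range] at hi
      rw [zero_add, hdig ⟨i, hi⟩]
    rw [hsum_eq] at hexp
    constructor
    · nlinarith [hTk.1, (by positivity : (0:ℝ) < (β ^ k)⁻¹)]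
    · nlinarith [hTk.2, (by positivity : (0:ℝ) < (β ^ k)⁻¹)]
  · -- Ico ⊆ cyl
    rintro y ⟨hy1, hy2⟩
    have hdg := digits_eq hβ ht hy1 hy2 k (le_refl k)
    refine ⟨⟨by linarith, by linarith [(by positivity : (0:ℝ) < (β ^ k)⁻¹)]⟩, ?_⟩
    intro i
    exact hdg.1 i i.2

end Stmt17aux

/-- a full cylinder of order k inside ((1−δ)ψ(n), ψ(n)), whose word starts
with at least t zeros when β^{−(t+1)} ≤ ψ(n) < β^{−t}. -/
theorem stmt17 (β : ℝ) (hβ : 1 < β) (ψ : ℕ → ℝ) (n : ℕ) (h1 : 0 < ψ n) (h2 : ψ n < 1)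
    (δ : ℝ) (hδ : δ ∈ Set.Ioo (0:ℝ) 1) (k : ℕ)
    (hk : (k + 1 : ℝ) * (β ^ k)⁻¹ ≤ δ * ψ n) :
    ∃ w : Fin k → ℤ, cyl β w ⊆ Set.Ioo ((1 - δ) * ψ n) (ψ n) ∧
      volume (cyl β w) = ENNReal.ofReal ((β ^ k)⁻¹) ∧
      ∀ t : ℕ, (β ^ (t + 1))⁻¹ ≤ ψ n → ψ n < (β ^ t)⁻¹ →
        ∀ j : Fin k, (j : ℕ) < t → w j = 0 := by
  obtain ⟨hδ0, hδ1⟩ := hδ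
  have hβ0 : (0:ℝ) < β := by linarith
  have hpk : (0:ℝ) < (β ^ k)⁻¹ := by positivity
  have hk1 : 1 ≤ k := by
    by_contra h
    have hk0 : k = 0 := by omega
    subst hk0
    simp only [pow_zero, inv_one, mul_one, Nat.cast_zero, zero_add, one_mul] at hk
    nlinarith
  set t : ℝ := ψ n - (β ^ k)⁻¹ with htdef
  have hβk_lt : (β ^ k)⁻¹ < ψ n := by
    have hkc : (0:ℝ) ≤ (k:ℝ) := Nat.cast_nonneg k
    nlinarith
  have ht0 : 0 ≤ t := by rw [htdef]; linarith
  have ht1 : t < 1 := by rw [htdef]; linarith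
  have hsum : t + (β ^ k)⁻¹ ≤ 1 := by rw [htdef]; linarith
  set a := Stmt17aux.As β t k 0 with hadef
  have hcyl : cyl β (fun j : Fin k => Stmt17aux.ws β t k j)
      = Set.Ico a (a + (β ^ k)⁻¹) := Stmt17aux.cyl_eq hβ ht0 hsum
  have hAt : a ≤ t := by
    have := Stmt17aux.As_le_xs (β := β) (t := t) (k := k) hβ ht0 k 0 (by omega)
    simpa [Stmt17aux.xs, ← hadef] using this
  have hA0 : 0 ≤ a := Stmt17aux.As_nonneg hβ ht0 0
  have hlow : (1 - δ) * ψ n < a := by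
    have hD := Stmt17aux.deficit (β := β) (t := t) hβ ht0 hk1 k 0 (by omega) (by omega)
    have hx0 : Stmt17aux.xs β t k 0 = t := rfl
    rw [hx0, ← hadef] at hD
    rw [htdef] at hD
    nlinarith
  refine ⟨fun j => Stmt17aux.ws β t k j, ?_, ?_, ?_⟩
  · rw [hcyl]
    rintro y ⟨hy1, hy2⟩
    exact ⟨lt_of_lt_of_le hlow hy1, by rw [htdef] at hAt; linarith⟩
  · rw [hcyl, Real.volume_Ico]
    congr 1
    ring
  · intro t' hlo hhi j hj
    have hx := Stmt17aux.xs_le_geom (β := β) (t := t) (k := k) hβ ht0 (j : ℕ)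
    have hxn := Stmt17aux.xs_nonneg (β := β) (t := t) (k := k) hβ ht0 (j : ℕ)
    have htψ : t < ψ n := by rw [htdef]; linarith
    have hb1 : β * Stmt17aux.xs β t k j ≤ β ^ ((j:ℕ)+1) * t := by
      rw [pow_succ, mul_comm (β ^ (j:ℕ)) β, mul_assoc]
      exact mul_le_mul_of_nonneg_left hx hβ0.le
    have hb2 : β ^ ((j:ℕ)+1) * t < β ^ ((j:ℕ)+1) * ψ n :=
      mul_lt_mul_of_pos_left htψ (by positivity)
    have hb3 : β ^ ((j:ℕ)+1) * ψ n < β ^ ((j:ℕ)+1) * (β ^ t')⁻¹ :=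
      mul_lt_mul_of_pos_left hhi (by positivity)
    have hb4 : β ^ ((j:ℕ)+1) * (β ^ t')⁻¹ ≤ 1 := by
      rw [← div_eq_mul_inv, div_le_one (by positivity)]
      exact pow_le_pow_right₀ hβ.le (by omega)
    show Stmt17aux.ws β t k j = 0
    rw [Stmt17aux.ws, Int.floor_eq_zero_iff]
    exact ⟨by positivity, by linarith⟩
end
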